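/- Let y_1, …, y_ℓ be real numbers and let ε, δ > 0. Suppose w_1, …, w_ℓ are real numbers such that (w_1, …, w_ℓ) is an accumulation point of the orbit of 0 under translation by (y_1, …, y_ℓ) on the ℓ-dimensional torus; that is, for every η > 0 there exist infinitely many positive integers n with max_{1≤i≤ℓ} ‖n·y_i − w_i‖ < η. Then for every n_0 > 0 there exist an integer M ≥ 1 and integers n_0 < n_1 < n_2 < … < n_M such that max_{1≤i≤ℓ} ‖n_m·y_i − w_i‖ ≤ ε/2 for every m = 1, …, M, and ∏_{m=1}^M (1 − ε/(n_m + 1)) < δ. -/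
import Mathlib


open MeasureTheory Filter Set

/-- Distance from a real number to the nearest integer. -/
noncomputable def nint (t : ℝ) : ℝ := |t - (round t : ℝ)|

lemma nint_le (x : ℝ) (k : ℤ) : nint x ≤ |x - (k : ℝ)| := by
  unfold nint
  rw [abs_sub_round_eq_min]
  have hfl : (⌊x⌋ : ℝ) + Int.fract x = x := Int.floor_add_fract x
  have hf0 : (0 : ℝ) ≤ Int.fract x := Int.fract_nonneg x
  have hf1 : Int.fract x < 1 := Int.fract_lt_one x
  rcases le_or_gt k ⌊x⌋ with h | h
  · have : (k : ℝ) ≤ ⌊x⌋ := by exact_mod_cast h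
    have hxk : Int.fract x ≤ x - k := by linarith
    calc min (Int.fract x) (1 - Int.fract x) ≤ Int.fract x := min_le_left _ _
      _ ≤ x - k := hxk
      _ ≤ |x - k| := le_abs_self _
  · have : (⌊x⌋ : ℝ) + 1 ≤ k := by exact_mod_cast h
    have hxk : 1 - Int.fract x ≤ k - x := by linarith
    calc min (Int.fract x) (1 - Int.fract x) ≤ 1 - Int.fract x := min_le_right _ _
      _ ≤ k - x := hxk
      _ ≤ |x - k| := by rw [abs_sub_comm]; exact le_abs_self _

lemma nint_nonneg (x : ℝ) : 0 ≤ nint x := abs_nonneg _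

lemma nint_add_le (a b : ℝ) : nint (a + b) ≤ nint a + nint b := by
  calc nint (a + b) ≤ |(a + b) - ((round a + round b : ℤ) : ℝ)| := nint_le _ _
    _ = |(a - round a) + (b - round b)| := by push_cast; ring_nf
    _ ≤ |a - (round a : ℝ)| + |b - (round b : ℝ)| := abs_add_le _ _
    _ = nint a + nint b := rfl

lemma nint_sub_le_abs_fract (s t : ℝ) : nint (s - t) ≤ |Int.fract s - Int.fract t| := by
  have h := nint_le (s - t) (⌊s⌋ - ⌊t⌋)
  refine h.trans_eq ?_
  have hs : (⌊s⌋ : ℝ) + Int.fract s = s := Int.floor_add_fract s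
  have ht : (⌊t⌋ : ℝ) + Int.fract t = t := Int.floor_add_fract t
  congr 1
  push_cast
  linarith

theorem stmt12 (ℓ : ℕ) (y w : Fin ℓ → ℝ) (ε δ : ℝ) (hε : 0 < ε) (hδ : 0 < δ)
    (hacc : ∀ η > (0 : ℝ),
      {n : ℕ | 0 < n ∧ ∀ i : Fin ℓ, nint ((n : ℝ) * y i - w i) < η}.Infinite) :
    ∀ n₀ : ℕ, 0 < n₀ →
      ∃ (M : ℕ) (n : Fin M → ℕ),
        1 ≤ M ∧ StrictMono n ∧ (∀ m, n₀ < n m) ∧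
        (∀ m : Fin M, ∀ i : Fin ℓ, nint ((n m : ℝ) * y i - w i) ≤ ε / 2) ∧
        (∏ m : Fin M, (1 - ε / ((n m : ℝ) + 1))) < δ := by
  intro n₀ hn₀
  -- the set of good return times at scale ε/4
  set S : Set ℕ := {n : ℕ | 0 < n ∧ ∀ i : Fin ℓ, nint ((n : ℝ) * y i - w i) < ε / 4}
    with hSdef
  have hS : S.Infinite := hacc (ε / 4) (by positivity)
  -- box decomposition of the torus
  set K : ℕ := ⌈4 / ε⌉₊ with hKdef
  have hK0 : 0 < K := Nat.ceil_pos.mpr (by positivity)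
  have hKR : (0 : ℝ) < K := by exact_mod_cast hK0
  have hKε : (1 : ℝ) / K ≤ ε / 4 := by
    have h1 : 4 / ε ≤ (K : ℝ) := Nat.le_ceil _
    rw [div_le_div_iff₀ hKR (by norm_num : (0:ℝ) < 4)]
    rw [div_le_iff₀ hε] at h1
    nlinarith
  -- coloring of integers by boxes
  have hcmem : ∀ (n : ℕ) (i : Fin ℓ), ⌊(K : ℝ) * Int.fract ((n : ℝ) * y i)⌋₊ < K := by
    intro n i
    have h1 : (K : ℝ) * Int.fract ((n : ℝ) * y i) < K := by
      have := Int.fract_lt_one ((n : ℝ) * y i)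
      nlinarith
    exact_mod_cast Nat.floor_lt (mul_nonneg hKR.le (Int.fract_nonneg _)) |>.mpr h1
  set c : ℕ → Fin ℓ → Fin K := fun n i => ⟨⌊(K : ℝ) * Int.fract ((n : ℝ) * y i)⌋₊, hcmem n i⟩
    with hcdef
  -- same box implies close on torus
  have hbox : ∀ n n' : ℕ, c n = c n' → ∀ i : Fin ℓ,
      nint ((n : ℝ) * y i - (n' : ℝ) * y i) ≤ ε / 4 := by
    intro n n' h i
    have hv : ⌊(K : ℝ) * Int.fract ((n : ℝ) * y i)⌋₊
        = ⌊(K : ℝ) * Int.fract ((n' : ℝ) * y i)⌋₊ := by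
      have := congrFun h i
      simpa [hcdef] using congrArg Fin.val this
    set u := (K : ℝ) * Int.fract ((n : ℝ) * y i) with hu
    set u' := (K : ℝ) * Int.fract ((n' : ℝ) * y i) with hu'
    have hu0 : 0 ≤ u := mul_nonneg hKR.le (Int.fract_nonneg _)
    have hu0' : 0 ≤ u' := mul_nonneg hKR.le (Int.fract_nonneg _)
    have h1 : (⌊u⌋₊ : ℝ) ≤ u := Nat.floor_le hu0
    have h2 : u < ⌊u⌋₊ + 1 := Nat.lt_floor_add_one u
    have h3 : (⌊u'⌋₊ : ℝ) ≤ u' := Nat.floor_le hu0'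
    have h4 : u' < ⌊u'⌋₊ + 1 := Nat.lt_floor_add_one u'
    have hv' : (⌊u⌋₊ : ℝ) = (⌊u'⌋₊ : ℝ) := by exact_mod_cast hv
    have habs : |u - u'| < 1 := abs_lt.mpr ⟨by linarith, by linarith⟩
    have heq : Int.fract ((n : ℝ) * y i) - Int.fract ((n' : ℝ) * y i) = (u - u') / K := by
      rw [hu, hu']; field_simp
    have hfr : |Int.fract ((n : ℝ) * y i) - Int.fract ((n' : ℝ) * y i)| < 1 / K := by
      rw [heq, abs_div, abs_of_pos hKR]
      gcongr
    calc nint ((n : ℝ) * y i - (n' : ℝ) * y i)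
        ≤ |Int.fract ((n : ℝ) * y i) - Int.fract ((n' : ℝ) * y i)| :=
          nint_sub_le_abs_fract _ _
      _ ≤ 1 / K := hfr.le
      _ ≤ ε / 4 := hKε
  -- for each color there is a bounded-shift return into the ε/2 neighbourhood
  have hstep : ∀ v : Fin ℓ → Fin K, ∃ j : ℕ, 1 ≤ j ∧
      ∀ n : ℕ, c n = v → ∀ i : Fin ℓ, nint (((n + j : ℕ) : ℝ) * y i - w i) ≤ ε / 2 := by
    intro v
    by_cases hv : ∃ n, c n = v
    · obtain ⟨n₁, hn₁⟩ := hv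
      obtain ⟨m, hmS, hm⟩ := hS.exists_gt n₁
      refine ⟨m - n₁, Nat.sub_pos_of_lt hm, ?_⟩
      intro n hn i
      have hcast : (((n + (m - n₁) : ℕ)) : ℝ) = (n : ℝ) + (m : ℝ) - (n₁ : ℝ) := by
        push_cast [Nat.cast_sub hm.le]; ring
      have hkey : (((n + (m - n₁) : ℕ)) : ℝ) * y i - w i
          = ((n : ℝ) * y i - (n₁ : ℝ) * y i) + ((m : ℝ) * y i - w i) := by
        rw [hcast]; ring
      rw [hkey]
      have h1 := hbox n n₁ (hn.trans hn₁.symm) i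
      have h2 := hmS.2 i
      calc nint (((n : ℝ) * y i - (n₁ : ℝ) * y i) + ((m : ℝ) * y i - w i))
          ≤ nint ((n : ℝ) * y i - (n₁ : ℝ) * y i) + nint ((m : ℝ) * y i - w i) :=
            nint_add_le _ _
        _ ≤ ε / 4 + ε / 4 := by linarith
        _ = ε / 2 := by ring
    · exact ⟨1, le_refl 1, fun n hn => absurd ⟨n, hn⟩ hv⟩
  choose J hJ1 hJ2 using hstep
  -- bound on the shifts
  set L : ℕ := Finset.univ.sup J with hLdef
  have hL : ∀ v, J v ≤ L := fun v => Finset.le_sup (Finset.mem_univ v)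
  have hL1 : 1 ≤ L := le_trans (hJ1 (c 0)) (hL (c 0))
  -- the recursively defined sequence
  set a : ℕ → ℕ := fun k => Nat.rec (max n₀ ⌈ε⌉₊) (fun _ p => p + J (c p)) k with hadef
  have ha0 : a 0 = max n₀ ⌈ε⌉₊ := rfl
  have haS : ∀ k, a (k + 1) = a k + J (c (a k)) := fun k => rfl
  have hamono : StrictMono a := by
    apply strictMono_nat_of_lt_succ
    intro k
    rw [haS k]
    have := hJ1 (c (a k))
    omega
  have haub : ∀ k, a k ≤ a 0 + k * L := by
    intro k
    induction k with
    | zero => simp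
    | succ k ih =>
      rw [haS k]
      have := hL (c (a k))
      have : J (c (a k)) ≤ L := this
      calc a k + J (c (a k)) ≤ (a 0 + k * L) + L := by omega
        _ = a 0 + (k + 1) * L := by ring
  have hagood : ∀ k : ℕ, ∀ i : Fin ℓ, nint (((a (k + 1)) : ℝ) * y i - w i) ≤ ε / 2 := by
    intro k i
    rw [haS k]
    exact hJ2 (c (a k)) (a k) rfl i
  have haε : ∀ k, ε ≤ (a k : ℝ) := by
    intro k
    have h1 : ⌈ε⌉₊ ≤ a 0 := by rw [ha0]; exact le_max_right _ _
    have h2 : a 0 ≤ a k := hamono.monotone (Nat.zero_le k)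
    calc ε ≤ (⌈ε⌉₊ : ℝ) := Nat.le_ceil ε
      _ ≤ (a 0 : ℝ) := by exact_mod_cast h1
      _ ≤ (a k : ℝ) := by exact_mod_cast h2
  -- the constant for the harmonic series comparison
  set C : ℝ := ε / ((a 0 : ℝ) + L + 1) with hCdef
  have hC0 : 0 < C := by
    apply div_pos hε
    positivity
  -- choose M large enough
  have hharm := Real.tendsto_sum_range_one_div_nat_succ_atTop
  have htend : Tendsto (fun M : ℕ =>
      Real.exp (-(C * ∑ i ∈ Finset.range M, (1 / ((i : ℝ) + 1))))) atTop (nhds 0) := by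
    apply Real.tendsto_exp_atBot.comp
    apply Filter.tendsto_neg_atBot_iff.mpr
    exact hharm.const_mul_atTop hC0
  obtain ⟨M, hM⟩ := ((htend.eventually_lt_const hδ).and (eventually_ge_atTop 1)).exists
  obtain ⟨hMδ, hM1⟩ := hM
  refine ⟨M, fun m => a (m.val + 1), hM1, ?_, ?_, ?_, ?_⟩
  · intro m m' hlt
    show a (m.val + 1) < a (m'.val + 1)
    exact hamono (Nat.succ_lt_succ (Fin.lt_def.mp hlt))
  · intro m
    have h1 : n₀ ≤ a 0 := by rw [ha0]; exact le_max_left _ _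
    have h2 : a 0 < a (m.val + 1) := hamono (Nat.succ_pos _)
    show n₀ < a (m.val + 1)
    omega
  · intro m i
    exact hagood m.val i
  · -- the product estimate
    have hfac : ∀ m : Fin M, 0 ≤ 1 - ε / ((a (m.val + 1) : ℝ) + 1) := by
      intro m
      have h1 : ε ≤ (a (m.val + 1) : ℝ) := haε (m.val + 1)
      have h2 : (0:ℝ) < (a (m.val + 1) : ℝ) + 1 := by positivity
      have : ε / ((a (m.val + 1) : ℝ) + 1) ≤ 1 := by
        rw [div_le_one h2]; linarith
      linarith
    have hfle : ∀ m : Fin M, 1 - ε / ((a (m.val + 1) : ℝ) + 1)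
        ≤ Real.exp (-(C * (1 / ((m.val : ℝ) + 1)))) := by
      intro m
      have hub : (a (m.val + 1) : ℝ) + 1 ≤ ((m.val : ℝ) + 1) * ((a 0 : ℝ) + L + 1) := by
        have h1 : a (m.val + 1) ≤ a 0 + (m.val + 1) * L := haub (m.val + 1)
        have h1' : (a (m.val + 1) : ℝ) ≤ (a 0 : ℝ) + ((m.val : ℝ) + 1) * L := by
          exact_mod_cast h1
        have hm0 : (0:ℝ) ≤ (m.val : ℝ) := Nat.cast_nonneg _
        have hL0 : (0:ℝ) ≤ (L : ℝ) := Nat.cast_nonneg _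
        have ha00 : (0:ℝ) ≤ (a 0 : ℝ) := Nat.cast_nonneg _
        nlinarith
      have hCle : C * (1 / ((m.val : ℝ) + 1)) ≤ ε / ((a (m.val + 1) : ℝ) + 1) := by
        rw [hCdef, div_mul_div_comm, mul_one, mul_comm ((a 0 : ℝ) + L + 1)]
        apply div_le_div_of_nonneg_left hε.le (by positivity) hub
      calc 1 - ε / ((a (m.val + 1) : ℝ) + 1)
          ≤ Real.exp (-(ε / ((a (m.val + 1) : ℝ) + 1))) := by
            have := Real.add_one_le_exp (-(ε / ((a (m.val + 1) : ℝ) + 1)))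
            linarith
        _ ≤ Real.exp (-(C * (1 / ((m.val : ℝ) + 1)))) := by
            apply Real.exp_le_exp.mpr
            linarith
    calc ∏ m : Fin M, (1 - ε / ((a (m.val + 1) : ℝ) + 1))
        ≤ ∏ m : Fin M, Real.exp (-(C * (1 / ((m.val : ℝ) + 1)))) :=
          Finset.prod_le_prod (fun m _ => hfac m) (fun m _ => hfle m)
      _ = Real.exp (∑ m : Fin M, -(C * (1 / ((m.val : ℝ) + 1)))) :=
          (Real.exp_sum _ _).symm
      _ = Real.exp (-(C * ∑ i ∈ Finset.range M, (1 / ((i : ℝ) + 1)))) := by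
          congr 1
          rw [Fin.sum_univ_eq_sum_range (fun i => -(C * (1 / ((i : ℝ) + 1)))) M,
            Finset.mul_sum, Finset.sum_neg_distrib]
      _ < δ := hMδ
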